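/- Let s ∈ 𝔠 be nonempty and let ξ be the least element of dom(s). Then |s| is a limit ordinal of cofinality ω if and only if ξ is a limit ordinal or s(ξ) is a limit ordinal. -/

import Mathlib

open Ordinal

noncomputable section

/-- ω₁ as an ordinal. -/
def w1 : Ordinal := (Cardinal.aleph 1).ord

/-- 𝔠: finite partial functions from ω₁ to ω₁ \ {0}, represented as finitely supported
functions `Ordinal →₀ Ordinal` (the extension `s̄` by `0`) whose support consists of
ordinals below ω₁ and whose (nonzero) values are below ω₁. -/
def Cc := {f : Ordinal →₀ Ordinal // (∀ ξ ∈ f.support, ξ < w1) ∧ (∀ ξ ∈ f.support, f ξ < w1)}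

/-- The anti-lexicographic order on 𝔠 : `s < t` iff `s̄ ξ < t̄ ξ` at the greatest `ξ`
where `s̄` and `t̄` differ. -/
def Clt (s t : Cc) : Prop :=
  ∃ ξ : Ordinal, s.1 ξ < t.1 ξ ∧ ∀ η : Ordinal, ξ < η → s.1 η = t.1 η

/-- `max(s)`: the largest ordinal occurring in `dom(s) ∪ ran(s)` (0 if `s = ∅`). -/
def maxC (s : Cc) : Ordinal :=
  (s.1.support ∪ s.1.support.image fun ξ => s.1 ξ).sup id

/-! ### Auxiliary lemmas -/

lemma w1_isLimit : Order.IsSuccLimit w1 := Cardinal.isSuccLimit_ord (Cardinal.aleph0_le_aleph 1)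

lemma zero_or_succ_or_limit' (o : Ordinal) :
    o = 0 ∨ (∃ a, o = Order.succ a) ∨ Order.IsSuccLimit o := by
  rcases Ordinal.zero_or_succ_or_isSuccLimit o with h | ⟨a, h⟩ | h
  · exact Or.inl h
  · exact Or.inr (Or.inl ⟨a, h.symm⟩)
  · exact Or.inr (Or.inr h)

lemma w1_pos : (0 : Ordinal) < w1 := w1_isLimit.pos

lemma val_lt_w1 (s : Cc) (η : Ordinal) : s.1 η < w1 := by
  by_cases h : η ∈ s.1.support
  · exact s.2.2 η h
  · rw [Finsupp.notMem_support_iff.1 h]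
    exact w1_pos

/-- Update one value of an element of `Cc`. -/
def updC (s : Cc) (ξ v : Ordinal) (hξ : ξ < w1) (hv : v < w1) : Cc :=
  ⟨s.1.update ξ v, by
    classical
    refine ⟨fun η hη => ?_, fun η _ => ?_⟩
    · rcases eq_or_ne η ξ with rfl | h
      · exact hξ
      · refine s.2.1 η ?_
        rw [Finsupp.mem_support_iff] at hη ⊢
        rwa [Finsupp.coe_update, Function.update_of_ne h] at hη
    · rcases eq_or_ne η ξ with rfl | h
      · rw [Finsupp.coe_update, Function.update_self]; exact hv
      · rw [Finsupp.coe_update, Function.update_of_ne h]; exact val_lt_w1 s η⟩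

lemma updC_apply (s : Cc) (ξ v : Ordinal) (hξ : ξ < w1) (hv : v < w1) (η : Ordinal) :
    (updC s ξ v hξ hv).1 η = if η = ξ then v else s.1 η := by
  classical
  show (s.1.update ξ v) η = _
  rw [Finsupp.coe_update, Function.update_apply]

/-- If `s` has a countable strictly dominating cofinal sequence of predecessors, then its
rank is a limit of cofinality ω. -/
lemma limit_and_cof_of_seq [IsWellOrder Cc Clt] (s : Cc) (t : ℕ → Cc)
    (ht : ∀ n, Clt (t n) s) (hcof : ∀ u, Clt u s → ∃ n, Clt u (t n)) :
    Order.IsSuccLimit (Ordinal.typein Clt s) ∧ (Ordinal.typein Clt s).cof = Cardinal.aleph0 := by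
  have hlt : ∀ n, typein Clt (t n) < typein Clt s := fun n => (typein_lt_typein Clt).2 (ht n)
  have key : ∀ a < typein Clt s, ∃ n, a < typein Clt (t n) := by
    intro a ha
    obtain ⟨u, hu⟩ := typein_surj Clt (ha.trans (typein_lt_type Clt s))
    obtain ⟨n, hn⟩ := hcof u ((typein_lt_typein Clt).1 (by rw [hu]; exact ha))
    exact ⟨n, by rw [← hu]; exact (typein_lt_typein Clt).2 hn⟩
  have hlim : Order.IsSuccLimit (typein Clt s) := by
    refine Order.isSuccLimit_iff_of_orderBot.2 ⟨fun h0 => ?_, Order.isSuccPrelimit_of_succ_lt fun a ha => ?_⟩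
    · exact absurd (h0 ▸ hlt 0) (not_lt_bot)
    · obtain ⟨n, hn⟩ := key a ha
      exact lt_of_le_of_lt (Order.succ_le_of_lt hn) (hlt n)
  refine ⟨hlim, le_antisymm ?_ (Ordinal.aleph0_le_cof.2 hlim)⟩
  have hls : typein Clt s = Ordinal.lsub (fun n : ℕ => typein Clt (t n)) := by
    apply le_antisymm
    · refine le_of_forall_lt fun a ha => ?_
      obtain ⟨n, hn⟩ := key a ha
      exact hn.trans (Ordinal.lt_lsub _ n)
    · exact Ordinal.lsub_le hlt
  rw [hls]
  refine le_trans (Ordinal.cof_lsub_le_lift _) ?_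
  rw [Cardinal.mk_nat, Cardinal.lift_aleph0]

/-- If `s` has an ω₁-indexed increasing dominating family of predecessors, then its rank
does not have cofinality ω. -/
lemma cof_ne_of_family [IsWellOrder Cc Clt] (s : Cc) (t : Ordinal → Cc)
    (hmono : ∀ a b, a < b → b < w1 → Clt (t a) (t b))
    (ht : ∀ a, a < w1 → Clt (t a) s)
    (hdom : ∀ u, Clt u s → ∃ a, a < w1 ∧ Clt u (t a)) :
    (Ordinal.typein Clt s).cof ≠ Cardinal.aleph0 := by
  intro hcof
  obtain ⟨ι, g, hg, hι⟩ := Ordinal.exists_lsub_cof (typein Clt s)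
  rw [hcof] at hι
  have hcnt : Countable ι := Cardinal.mk_le_aleph0_iff.1 hι.le
  have hne : Nonempty ι := Cardinal.mk_ne_zero_iff.1 (by rw [hι]; exact Cardinal.aleph0_ne_zero)
  obtain ⟨e, he⟩ := exists_surjective_nat ι
  have hgi : ∀ i, g i < typein Clt s := fun i => hg ▸ Ordinal.lt_lsub g i
  choose u hu using fun i => typein_surj Clt ((hgi i).trans (typein_lt_type Clt s))
  have hus : ∀ i, Clt (u i) s := fun i => (typein_lt_typein Clt).1 (by rw [hu]; exact hgi i)
  choose a ha1 ha2 using fun i => hdom (u i) (hus i)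
  set b : Ordinal := ⨆ n : ℕ, a (e n) + 1 with hb
  have hbw : b < w1 := by
    refine Ordinal.iSup_lt_ord_lift ?_ fun n => ?_
    · rw [Cardinal.mk_nat, Cardinal.lift_aleph0, w1, Cardinal.isRegular_aleph_one.cof_eq]
      exact Cardinal.aleph0_lt_aleph_one
    · rw [Ordinal.add_one_eq_succ]
      exact w1_isLimit.succ_lt (ha1 _)
  have hab : ∀ i, a i < b := by
    intro i
    obtain ⟨n, hn⟩ := he i
    have h1 : a (e n) + 1 ≤ b := Ordinal.le_iSup (fun n : ℕ => a (e n) + 1) n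
    rw [hn] at h1
    exact lt_of_lt_of_le (by rw [Ordinal.add_one_eq_succ]; exact Order.lt_succ _) h1
  have hts : Clt (t b) s := ht b hbw
  have hlb : typein Clt (t b) < Ordinal.lsub g := hg ▸ (typein_lt_typein Clt).2 hts
  obtain ⟨i, hi⟩ := Ordinal.lt_lsub_iff.1 hlb
  have h1 : Clt (u i) (t b) := IsTrans.trans _ _ _ (ha2 i) (hmono (a i) b (hab i) hbw)
  have h2 : typein Clt (u i) < typein Clt (t b) := (typein_lt_typein Clt).2 h1
  rw [hu i] at h2
  exact absurd (h2.trans_le hi) (lt_irrefl _)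

/-- Every ordinal below ω₁ has countable cofinality. -/
lemma cof_le_aleph0_of_lt_w1 {γ : Ordinal} (h : γ < w1) : γ.cof ≤ Cardinal.aleph0 := by
  have h1 : γ.card < Cardinal.aleph 1 := Cardinal.lt_ord.1 h
  rw [← Cardinal.succ_aleph0, Order.lt_succ_iff] at h1
  exact (Ordinal.cof_le_card γ).trans h1

/-- Extract a cofinal ℕ-sequence in a nonzero ordinal below ω₁. -/
lemma exists_nat_cofinal {γ : Ordinal} (hγ : γ < w1) (h0 : γ ≠ 0) :
    ∃ g : ℕ → Ordinal, (∀ n, g n < γ) ∧ ∀ δ < γ, ∃ n, δ ≤ g n := by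
  obtain ⟨ι, g, hg, hι⟩ := Ordinal.exists_lsub_cof γ
  have hcnt : Countable ι := Cardinal.mk_le_aleph0_iff.1 (hι ▸ cof_le_aleph0_of_lt_w1 hγ)
  have hne : Nonempty ι := by
    by_contra h
    rw [not_nonempty_iff] at h
    exact h0 (by rw [← hg, Ordinal.lsub_empty])
  obtain ⟨e, he⟩ := exists_surjective_nat ι
  refine ⟨fun n => g (e n), fun n => hg ▸ Ordinal.lt_lsub g (e n), fun δ hδ => ?_⟩
  rw [← hg] at hδ
  obtain ⟨i, hi⟩ := Ordinal.lt_lsub_iff.1 hδ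
  obtain ⟨n, rfl⟩ := he i
  exact ⟨n, hi⟩

/-- For nonempty `s` in 𝔠 with `ξ` least in the domain of `s`: the rank of `s` is a limit
ordinal of cofinality ω iff `ξ` is a limit ordinal or `s ξ` is a limit ordinal. -/
theorem stmt_6 [IsWellOrder Cc Clt] (s : Cc) (hs : s.1.support.Nonempty) :
    (Order.IsSuccLimit (Ordinal.typein Clt s) ∧ (Ordinal.typein Clt s).cof = Cardinal.aleph0) ↔
      (Order.IsSuccLimit (s.1.support.min' hs) ∨ Order.IsSuccLimit (s.1 (s.1.support.min' hs))) := by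
  classical
  set ξ₀ := s.1.support.min' hs with hξ₀
  have hmem : ξ₀ ∈ s.1.support := s.1.support.min'_mem hs
  have hv0 : s.1 ξ₀ ≠ 0 := Finsupp.mem_support_iff.1 hmem
  have hlow : ∀ η, η < ξ₀ → s.1 η = 0 := by
    intro η h
    by_contra h0
    exact absurd (s.1.support.min'_le η (Finsupp.mem_support_iff.2 h0)) (not_le.2 h)
  have hξw : ξ₀ < w1 := s.2.1 _ hmem
  have hvw : s.1 ξ₀ < w1 := s.2.2 _ hmem
  have hwit : ∀ u, Clt u s → ∃ ξ, ξ₀ ≤ ξ ∧ u.1 ξ < s.1 ξ ∧ ∀ η, ξ < η → u.1 η = s.1 η := by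
    rintro u ⟨ξ, h1, h2⟩
    refine ⟨ξ, ?_, h1, h2⟩
    by_contra h
    rw [not_le] at h
    rw [hlow ξ h] at h1
    exact absurd h1 (not_lt_bot)
  constructor
  · -- forward direction, by contradiction
    rintro ⟨hlim, hcof⟩
    by_contra hR
    push_neg at hR
    obtain ⟨hR1, hR2⟩ := hR
    obtain ⟨β, hβ⟩ : ∃ β, s.1 ξ₀ = Order.succ β :=
      ((zero_or_succ_or_limit' (s.1 ξ₀)).resolve_left hv0).resolve_right hR2
    have hβw : β < w1 := lt_trans (hβ ▸ Order.lt_succ β) hvw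
    have hβlt : β < s.1 ξ₀ := hβ ▸ Order.lt_succ β
    rcases zero_or_succ_or_limit' ξ₀ with hz | ⟨η₀, hη⟩ | hl'
    · -- ξ₀ = 0 : `s` has an immediate predecessor, so its rank is a successor
      set t : Cc := updC s ξ₀ β hξw hβw with htdef
      have hts : Clt t s := by
        refine ⟨ξ₀, ?_, fun η hη => ?_⟩
        · rw [updC_apply, if_pos rfl]; exact hβlt
        · rw [updC_apply, if_neg (ne_of_gt hη)]
      have hpred : ∀ u, Clt u s → u = t ∨ Clt u t := by
        intro u hu
        obtain ⟨ξ, hξ, h1, h2⟩ := hwit u hu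
        rcases eq_or_lt_of_le hξ with heq | hgt
        · -- ξ = ξ₀
          subst heq
          rw [hβ, Order.lt_succ_iff] at h1
          rcases lt_or_eq_of_le h1 with hlt | heq2
          · right
            refine ⟨ξ₀, ?_, fun η hη => ?_⟩
            · rw [updC_apply, if_pos rfl]; exact hlt
            · rw [updC_apply, if_neg (ne_of_gt hη)]; exact h2 η hη
          · left
            apply Subtype.ext
            refine Finsupp.ext ?_
            intro η
            rcases eq_or_ne η ξ₀ with rfl | hne
            · show u.1 ξ₀ = t.1 ξ₀
              rw [updC_apply, if_pos rfl]; exact heq2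
            · have hpos : ξ₀ < η := by
                rw [hz] at hne ⊢
                exact pos_iff_ne_zero.2 hne
              show u.1 η = t.1 η
              rw [updC_apply, if_neg (ne_of_gt hpos)]
              exact h2 η hpos
        · right
          refine ⟨ξ, ?_, fun η hη => ?_⟩
          · rw [updC_apply, if_neg (ne_of_gt hgt)]; exact h1
          · rw [updC_apply, if_neg (ne_of_gt (hgt.trans hη))]; exact h2 η hη
      have h1 : typein Clt t < typein Clt s := (typein_lt_typein Clt).2 hts
      have h2 : typein Clt s ≤ typein Clt t + 1 := by
        by_contra h
        rw [not_le] at h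
        obtain ⟨u, hu⟩ := typein_surj Clt (h.trans (typein_lt_type Clt s))
        have hus : Clt u s := (typein_lt_typein Clt).1 (by rw [hu]; exact h)
        rcases hpred u hus with rfl | hut
        · rw [Ordinal.add_one_eq_succ] at hu
          exact (Order.lt_succ _).ne hu
        · have h3 : typein Clt u < typein Clt t := (typein_lt_typein Clt).2 hut
          rw [hu] at h3
          have h4 : typein Clt t < typein Clt t + 1 := by
            rw [Ordinal.add_one_eq_succ]; exact Order.lt_succ _
          exact absurd h3 (not_lt.2 h4.le)
      have hsucc : typein Clt s = typein Clt t + 1 :=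
        le_antisymm h2 (by rw [Ordinal.add_one_eq_succ]; exact Order.succ_le_of_lt h1)
      rw [hsucc, Ordinal.add_one_eq_succ] at hlim
      exact absurd (hlim.succ_lt (Order.lt_succ _)) (lt_irrefl _)
    · -- ξ₀ = succ η₀ : the rank of `s` has cofinality ω₁
      have hη₀ξ : η₀ < ξ₀ := hη ▸ Order.lt_succ η₀
      have hη₀w : η₀ < w1 := hη₀ξ.trans hξw
      set T : Ordinal → Cc := fun a =>
        if ha : a < w1 then updC (updC s ξ₀ β hξw hβw) η₀ a hη₀w ha else s with hTdef
      have hT : ∀ a, ∀ ha : a < w1, ∀ η,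
          (T a).1 η = if η = η₀ then a else if η = ξ₀ then β else s.1 η := by
        intro a ha η
        simp only [hTdef, dif_pos ha]
        rw [updC_apply, updC_apply]
      have hη₀ne : ξ₀ ≠ η₀ := ne_of_gt hη₀ξ
      refine absurd hcof (cof_ne_of_family s T ?_ ?_ ?_)
      · -- monotone
        intro a b hab hbw
        have haw : a < w1 := hab.trans hbw
        refine ⟨η₀, ?_, fun η hη => ?_⟩
        · rw [hT a haw, hT b hbw, if_pos rfl, if_pos rfl]; exact hab
        · rw [hT a haw, hT b hbw, if_neg (ne_of_gt hη), if_neg (ne_of_gt hη)]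
      · -- each T a precedes s
        intro a ha
        refine ⟨ξ₀, ?_, fun η hη => ?_⟩
        · rw [hT a ha, if_neg hη₀ne, if_pos rfl]; exact hβlt
        · rw [hT a ha, if_neg (ne_of_gt (hη₀ξ.trans hη)), if_neg (ne_of_gt hη)]
      · -- domination
        intro u hu
        obtain ⟨ξ, hξ, h1, h2⟩ := hwit u hu
        rcases eq_or_lt_of_le hξ with heq | hgt
        · subst heq
          rw [hβ, Order.lt_succ_iff] at h1
          rcases lt_or_eq_of_le h1 with hlt | heq2
          · refine ⟨0, w1_pos, ξ₀, ?_, fun η hη => ?_⟩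
            · rw [hT 0 w1_pos, if_neg hη₀ne, if_pos rfl]; exact hlt
            · rw [hT 0 w1_pos, if_neg (ne_of_gt (hη₀ξ.trans hη)), if_neg (ne_of_gt hη)]
              exact h2 η hη
          · have haw : u.1 η₀ + 1 < w1 := by
              rw [Ordinal.add_one_eq_succ]
              exact w1_isLimit.succ_lt (val_lt_w1 u η₀)
            refine ⟨u.1 η₀ + 1, haw, η₀, ?_, fun η hηgt => ?_⟩
            · rw [hT _ haw, if_pos rfl, Ordinal.add_one_eq_succ]; exact Order.lt_succ _
            · have hξ₀η : ξ₀ ≤ η := by rw [hη]; exact Order.succ_le_of_lt hηgt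
              rcases eq_or_lt_of_le hξ₀η with heq3 | hgt3
              · rw [hT _ haw, ← heq3, if_neg hη₀ne, if_pos rfl]; exact heq2
              · rw [hT _ haw, if_neg (ne_of_gt (hη₀ξ.trans hgt3)), if_neg (ne_of_gt hgt3)]
                exact h2 η hgt3
        · refine ⟨0, w1_pos, ξ, ?_, fun η hη => ?_⟩
          · rw [hT 0 w1_pos, if_neg (ne_of_gt (hη₀ξ.trans hgt)), if_neg (ne_of_gt hgt)]
            exact h1
          · rw [hT 0 w1_pos, if_neg (ne_of_gt (hη₀ξ.trans (hgt.trans hη))),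
              if_neg (ne_of_gt (hgt.trans hη))]
            exact h2 η hη
    · exact hR1 hl'
  · -- backward direction
    intro hR
    by_cases hvl : Order.IsSuccLimit (s.1 ξ₀)
    · -- s ξ₀ is a limit
      obtain ⟨g, hg1, hg2⟩ := exists_nat_cofinal hvw hv0
      set t : ℕ → Cc := fun n => updC s ξ₀ (g n) hξw ((hg1 n).trans hvw) with htdef
      refine limit_and_cof_of_seq s t (fun n => ?_) (fun u hu => ?_)
      · refine ⟨ξ₀, ?_, fun η hη => ?_⟩
        · rw [updC_apply, if_pos rfl]; exact hg1 n
        · rw [updC_apply, if_neg (ne_of_gt hη)]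
      · obtain ⟨ξ, hξ, h1, h2⟩ := hwit u hu
        rcases eq_or_lt_of_le hξ with heq | hgt
        · subst heq
          obtain ⟨n, hn⟩ := hg2 (u.1 ξ₀ + 1) (by
            rw [Ordinal.add_one_eq_succ]; exact hvl.succ_lt h1)
          have hlt : u.1 ξ₀ < g n := by
            rw [Ordinal.add_one_eq_succ] at hn
            exact (Order.lt_succ _).trans_le hn
          refine ⟨n, ξ₀, ?_, fun η hη => ?_⟩
          · rw [updC_apply, if_pos rfl]; exact hlt
          · rw [updC_apply, if_neg (ne_of_gt hη)]; exact h2 η hη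
        · refine ⟨0, ξ, ?_, fun η hη => ?_⟩
          · rw [updC_apply, if_neg (ne_of_gt hgt)]; exact h1
          · rw [updC_apply, if_neg (ne_of_gt (hgt.trans hη))]; exact h2 η hη
    · -- ξ₀ is a limit and s ξ₀ is a successor
      have hξl : Order.IsSuccLimit ξ₀ := hR.resolve_right hvl
      obtain ⟨β, hβ⟩ : ∃ β, s.1 ξ₀ = Order.succ β :=
        ((zero_or_succ_or_limit' (s.1 ξ₀)).resolve_left hv0).resolve_right hvl
      have hβw : β < w1 := lt_trans (hβ ▸ Order.lt_succ β) hvw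
      have hβlt : β < s.1 ξ₀ := hβ ▸ Order.lt_succ β
      have h1w : (1 : Ordinal) < w1 := by
        rw [← Ordinal.succ_zero]; exact w1_isLimit.succ_lt w1_pos
      obtain ⟨g, hg1, hg2⟩ := exists_nat_cofinal hξw hξl.ne_bot
      set t : ℕ → Cc := fun n =>
        updC (updC s ξ₀ β hξw hβw) (g n) 1 ((hg1 n).trans hξw) h1w with htdef
      have hT : ∀ n η, (t n).1 η = if η = g n then 1 else if η = ξ₀ then β else s.1 η := by
        intro n η
        rw [updC_apply, updC_apply]
      have hgne : ∀ n, ξ₀ ≠ g n := fun n => ne_of_gt (hg1 n)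
      refine limit_and_cof_of_seq s t (fun n => ?_) (fun u hu => ?_)
      · refine ⟨ξ₀, ?_, fun η hη => ?_⟩
        · rw [hT, if_neg (hgne n), if_pos rfl]; exact hβlt
        · rw [hT, if_neg (ne_of_gt ((hg1 n).trans hη)), if_neg (ne_of_gt hη)]
      · obtain ⟨ξ, hξ, h1, h2⟩ := hwit u hu
        rcases eq_or_lt_of_le hξ with heq | hgt
        · subst heq
          rw [hβ, Order.lt_succ_iff] at h1
          rcases lt_or_eq_of_le h1 with hlt | heq2
          · refine ⟨0, ξ₀, ?_, fun η hη => ?_⟩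
            · rw [hT, if_neg (hgne 0), if_pos rfl]; exact hlt
            · rw [hT, if_neg (ne_of_gt ((hg1 0).trans hη)), if_neg (ne_of_gt hη)]
              exact h2 η hη
          · -- u agrees with s at and above ξ₀ (with value β at ξ₀)
            set F : Finset Ordinal := u.1.support.filter (· < ξ₀) with hF
            set δ : Ordinal := if h : F.Nonempty then F.max' h else 0 with hδdef
            have hδξ : δ < ξ₀ := by
              rw [hδdef]
              split
              · next h => exact (Finset.mem_filter.1 (F.max'_mem h)).2
              · exact hξl.pos
            have hFle : ∀ x ∈ F, x ≤ δ := by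
              intro x hx
              have hne : F.Nonempty := ⟨x, hx⟩
              rw [hδdef, dif_pos hne]
              exact F.le_max' x hx
            obtain ⟨n, hn⟩ := hg2 (δ + 1) (by
              rw [Ordinal.add_one_eq_succ]; exact hξl.succ_lt hδξ)
            have hδg : δ < g n := by
              rw [Ordinal.add_one_eq_succ] at hn
              exact (Order.lt_succ _).trans_le hn
            have hnotmem : ∀ η, η < ξ₀ → δ < η → u.1 η = 0 := by
              intro η hηlt hηgt
              by_contra h0
              have hmemF : η ∈ F :=
                Finset.mem_filter.2 ⟨Finsupp.mem_support_iff.2 h0, hηlt⟩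
              exact absurd (hFle η hmemF) (not_le.2 hηgt)
            refine ⟨n, g n, ?_, fun η hη => ?_⟩
            · rw [hT, if_pos rfl, hnotmem (g n) (hg1 n) hδg]
              exact zero_lt_one
            · rcases lt_trichotomy η ξ₀ with hlt3 | rfl | hgt3
              · rw [hT, if_neg (ne_of_gt hη), if_neg (ne_of_lt hlt3),
                  hnotmem η hlt3 (hδg.trans hη), hlow η hlt3]
              · rw [hT, if_neg (hgne n), if_pos rfl]; exact heq2
              · rw [hT, if_neg (ne_of_gt hη), if_neg (ne_of_gt hgt3)]
                exact h2 η hgt3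
        · refine ⟨0, ξ, ?_, fun η hη => ?_⟩
          · rw [hT, if_neg (ne_of_gt ((hg1 0).trans hgt)), if_neg (ne_of_gt hgt)]
            exact h1
          · rw [hT, if_neg (ne_of_gt ((hg1 0).trans (hgt.trans hη))),
              if_neg (ne_of_gt (hgt.trans hη))]
            exact h2 η hη
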